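/- Let $F : \mathbb{C}^2 \to \mathbb{C}^2$ be a proper polynomial map, let $C(F) = \{J(F) = 0\}$ be its critical curve and $\Delta(F) = F(C(F))$ its discriminant. Suppose $p \in \Delta(F)$ with $F^{-1}(p) \cap C(F) = \{q_1, q_2\}$, $q_1 \neq q_2$, both smooth points of $C(F)$ at which $dF$ restricted to $T_{q_i}C(F)$ is nonzero. Then $\Delta(F)$ has a normal crossing at $p$ if and only if the vectors $(J_{1,1}(F)(q_1), J_{1,2}(F)(q_1))$ and $(J_{1,1}(F)(q_2), J_{1,2}(F)(q_2))$ are linearly independent, i.e. $J_{1,1}(F)(q_1) J_{1,2}(F)(q_2) - J_{1,2}(F)(q_1) J_{1,1}(F)(q_2) \neq 0$. -/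

import Mathlib

open MvPolynomial Filter

/-- A plane curve `Δ` has a normal crossing at `p` if near `p` it is the union of
two smooth analytic branches with transverse tangents. -/
def NormalCrossingAt (Δ : Set (Fin 2 → ℂ)) (p : Fin 2 → ℂ) : Prop :=
  ∃ φ ψ : (Fin 2 → ℂ) → ℂ, AnalyticAt ℂ φ p ∧ AnalyticAt ℂ ψ p ∧
    φ p = 0 ∧ ψ p = 0 ∧
    LinearIndependent ℂ ![fderiv ℂ φ p, fderiv ℂ ψ p] ∧
    ∀ᶠ z in nhds p, (z ∈ Δ ↔ (φ z = 0 ∨ ψ z = 0))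

/-!
Near each `qᵢ` the critical curve is an analytic arc, and its image under `F` is a smooth branch
of `Δ(F)` through `p`, cut out by an analytic equation whose differential kills the tangent line
`dF(T_{qᵢ}C(F))`, spanned by `(J₁,₁(qᵢ), J₁,₂(qᵢ))`. Properness forces every critical point over a
point near `p` to lie near `q₁` or `q₂`, so near `p` the discriminant is exactly the union of the
two branches. If their tangents are independent, the two branch equations exhibit the normal
crossing. If the tangents are parallel, let `φ, ψ` be any two equations with the same union:
restricting the branch equations to an arc of `{φ = 0}` and applying the identity theorem shows
that `{φ = 0}` is tangent to one of the branches, so `dφ`, and likewise `dψ`, kills the common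
tangent, and `dφ, dψ` are dependent.
-/

open Topology Module Set

section LinearAlgebra

variable {𝕜 E F : Type*} [NontriviallyNormedField 𝕜] [NormedAddCommGroup E] [NormedSpace 𝕜 E]
  [NormedAddCommGroup F] [NormedSpace 𝕜 F] [Fact (finrank 𝕜 E = 2)]

attribute [local instance] FiniteDimensional.of_fact_finrank_eq_two

theorem exists_linearIndependent_pair {w : E} (hw : w ≠ 0) :
    ∃ z : E, LinearIndependent 𝕜 ![w, z] := by
  by_contra! h
  have hspan : 𝕜 ∙ w = ⊤ := eq_top_iff.2 fun z _ =>
    Submodule.mem_span_singleton.2 (by simpa [LinearIndependent.pair_iff' hw] using h z)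
  have := congrArg (fun S : Submodule 𝕜 E => finrank 𝕜 S) hspan
  simp [finrank_span_singleton hw, Fact.out (p := finrank 𝕜 E = 2)] at this

theorem ContinuousLinearMap.eq_zero_of_apply_pair_eq_zero {u v : E}
    (huv : LinearIndependent 𝕜 ![u, v]) {T : E →L[𝕜] F} (hu : T u = 0) (hv : T v = 0) :
    T = 0 := by
  let b := basisOfLinearIndependentOfCardEqFinrank huv (by simp [Fact.out (p := finrank 𝕜 E = 2)])
  refine ContinuousLinearMap.coe_injective (b.ext fun i => ?_)
  fin_cases i <;> simp [b, hu, hv]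

theorem ContinuousLinearMap.exists_smul_eq_of_apply_eq_zero {A : E →L[𝕜] 𝕜} (hA : A ≠ 0)
    {u v : E} (hu : u ≠ 0) (hAu : A u = 0) (hAv : A v = 0) : ∃ c : 𝕜, c • u = v := by
  by_contra h
  exact hA (A.eq_zero_of_apply_pair_eq_zero ((LinearIndependent.pair_iff' hu).2
    fun c hc => h ⟨c, hc⟩) hAu hAv)

theorem ContinuousLinearMap.exists_ne_zero_apply_eq_zero (A : E →L[𝕜] 𝕜) :
    ∃ u : E, u ≠ 0 ∧ A u = 0 := by
  have hrange : finrank 𝕜 (LinearMap.range (A : E →ₗ[𝕜] 𝕜)) ≤ 1 :=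
    (Submodule.finrank_le _).trans (by simp)
  have hker : LinearMap.ker (A : E →ₗ[𝕜] 𝕜) ≠ ⊥ := by
    intro h
    have := LinearMap.finrank_range_add_finrank_ker (A : E →ₗ[𝕜] 𝕜)
    rw [h, finrank_bot, Fact.out (p := finrank 𝕜 E = 2)] at this
    omega
  obtain ⟨u, hu, hu0⟩ := Submodule.exists_mem_ne_zero_of_ne_bot hker
  exact ⟨u, hu0, hu⟩

theorem ContinuousLinearMap.not_linearIndependent_of_apply_eq_zero {A B : E →L[𝕜] 𝕜} {u : E}
    (hu : u ≠ 0) (hA : A u = 0) (hB : B u = 0) : ¬ LinearIndependent 𝕜 ![A, B] := by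
  intro hAB
  obtain ⟨z, hz⟩ : ∃ z, A z ≠ 0 := by
    by_contra! h
    exact hAB.ne_zero 0 (ContinuousLinearMap.ext h)
  have huz : LinearIndependent 𝕜 ![u, z] :=
    (LinearIndependent.pair_iff' hu).2 fun c hc => hz (by simp [← hc, hA])
  have hcomb : A z • B + (-B z) • A = 0 :=
    eq_zero_of_apply_pair_eq_zero huz (by simp [hA, hB]) (by simp [mul_comm])
  exact hz (LinearIndependent.pair_iff.1 hAB _ _ (by rw [add_comm]; exact hcomb)).2

theorem ContinuousLinearMap.linearIndependent_of_apply_eq_zero {A B : E →L[𝕜] 𝕜} {u v : E}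
    (huv : LinearIndependent 𝕜 ![u, v]) (hA : A ≠ 0) (hB : B ≠ 0) (hAu : A u = 0)
    (hBv : B v = 0) : LinearIndependent 𝕜 ![A, B] := by
  have hAv : A v ≠ 0 := fun h => hA (eq_zero_of_apply_pair_eq_zero huv hAu h)
  have hBu : B u ≠ 0 := fun h => hB (eq_zero_of_apply_pair_eq_zero huv h hBv)
  refine LinearIndependent.pair_iff.2 fun s t hst => ?_
  have hu := congrArg (· u) hst
  have hv := congrArg (· v) hst
  simp only [add_apply, smul_apply, hAu, hBv, smul_eq_mul, mul_zero, zero_add, add_zero,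
    zero_apply, mul_eq_zero] at hu hv
  exact ⟨hv.resolve_right hAv, hu.resolve_right hBu⟩

end LinearAlgebra

theorem linearIndependent_pair_iff_det_ne_zero {K : Type*} [Field K] (u v : Fin 2 → K) :
    LinearIndependent K ![u, v] ↔ u 0 * v 1 - u 1 * v 0 ≠ 0 := by
  have := Matrix.linearIndependent_rows_iff_isUnit (A := Matrix.of ![u, v])
  rw [Matrix.isUnit_iff_isUnit_det, Matrix.det_fin_two, isUnit_iff_ne_zero] at this
  exact this

instance {K : Type*} [Field K] : Fact (finrank K (Fin 2 → K) = 2) := ⟨Module.finrank_fin_fun K⟩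

theorem exists_smul_eq_of_sum_mul_eq_zero {K : Type*} [Field K] {a v : Fin 2 → K} (ha : a ≠ 0)
    (hv : ∑ i, a i * v i = 0) : ∃ c : K, c • ![a 1, -a 0] = v := by
  have hn : ![a 1, -a 0] ≠ 0 := fun h => ha (by
    ext i; fin_cases i
    · simpa using congrFun h 1
    · simpa using congrFun h 0)
  have : ¬ LinearIndependent K ![![a 1, -a 0], v] := by
    rw [linearIndependent_pair_iff_det_ne_zero, not_not]
    simp only [Fin.sum_univ_two] at hv
    simp only [Matrix.cons_val_zero, Matrix.cons_val_one, Matrix.cons_val_fin_one]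
    linear_combination hv
  simpa [LinearIndependent.pair_iff' hn] using this

section LocalEquation

variable {X Y E : Type*} [TopologicalSpace X] [Zero X] [TopologicalSpace E]

/-- The zero set of `α` near `γ 0` is the image of the germ of `γ` at `0`. -/
def IsLocalEquation [Zero Y] (α : E → Y) (γ : X → E) : Prop :=
  (∀ᶠ t in 𝓝 0, α (γ t) = 0) ∧ ∀ s ∈ 𝓝 (0 : X), ∀ᶠ x in 𝓝 (γ 0), α x = 0 → x ∈ γ '' s

theorem isLocalEquation_snd_of_localInverse [TopologicalSpace Y] [Zero Y]
    {Φ : X × Y → E} {G : E → X × Y} (hG : ContinuousAt G (Φ 0))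
    (hGΦ : ∀ᶠ y in 𝓝 0, G (Φ y) = y) (hΦG : ∀ᶠ x in 𝓝 (Φ 0), Φ (G x) = x) :
    IsLocalEquation (fun x => (G x).2) (fun t => Φ (t, 0)) := by
  refine ⟨?_, fun s hs => ?_⟩
  · have : Tendsto (fun t : X => (t, (0 : Y))) (𝓝 0) (𝓝 0) :=
      (continuous_id.prodMk continuous_const).tendsto' 0 0 rfl
    filter_upwards [this.eventually hGΦ] with t ht
    rw [ht]
  · have hG0 : Tendsto (fun x => (G x).1) (𝓝 (Φ 0)) (𝓝 0) := by
      have := (continuous_fst.tendsto _).comp hG.tendsto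
      rwa [hGΦ.self_of_nhds] at this
    filter_upwards [hG0 hs, hΦG] with x hxs hx hx0
    exact ⟨(G x).1, hxs,
      (congrArg Φ (Prod.ext (x := ((G x).1, 0)) (y := G x) rfl hx0.symm)).trans hx⟩

variable {E' Y' : Type*} [TopologicalSpace E'] [Zero Y] [Zero Y'] {α : E → Y} {γ : X → E}
  {F : E → E'} {φ : E' → Y'}

theorem IsLocalEquation.eventually_mem_image (hα : IsLocalEquation α γ)
    (hφ : IsLocalEquation φ (F ∘ γ)) :
    ∀ᶠ z in 𝓝 (F (γ 0)), φ z = 0 → z ∈ F '' {x | α x = 0} :=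
  (hφ.2 _ hα.1).mono fun _ hz hφz =>
    let ⟨t, ht, htz⟩ := hz hφz
    ⟨γ t, ht, htz⟩

theorem IsLocalEquation.eventually_comp_eq_zero (hα : IsLocalEquation α γ)
    (hφ : IsLocalEquation φ (F ∘ γ)) : ∀ᶠ x in 𝓝 (γ 0), α x = 0 → φ (F x) = 0 :=
  (hα.2 _ hφ.1).mono fun _ hx hαx =>
    let ⟨_, ht, htx⟩ := hx hαx
    htx ▸ ht

end LocalEquation

theorem IsProperMap.eventually_preimage_inter_subset {X Y : Type*} [TopologicalSpace X]
    [TopologicalSpace Y] {F : X → Y} (hF : IsProperMap F) {C U : Set X} (hC : IsClosed C)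
    {p : Y} (hU : U ∈ 𝓝ˢ (F ⁻¹' {p} ∩ C)) : ∀ᶠ z in 𝓝 p, F ⁻¹' {z} ∩ C ⊆ U := by
  have hK : IsClosed (F '' (C \ interior U)) :=
    hF.isClosedMap _ (hC.sdiff isOpen_interior)
  have hp : p ∉ F '' (C \ interior U) := by
    rintro ⟨x, ⟨hxC, hxU⟩, rfl⟩
    exact hxU (subset_interior_iff_mem_nhdsSet.2 hU ⟨rfl, hxC⟩)
  filter_upwards [hK.isOpen_compl.mem_nhds hp] with z hz x ⟨rfl, hxC⟩
  by_contra hxU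
  exact hz ⟨x, ⟨hxC, fun h => hxU (interior_subset h)⟩, rfl⟩

theorem IsProperMap.eventually_mem_image_iff_or {X Y : Type*} [TopologicalSpace X]
    [TopologicalSpace Y] {F : X → Y} (hF : IsProperMap F) {C : Set X} (hC : IsClosed C) {p : Y}
    {q₁ q₂ : X} (hfib : F ⁻¹' {p} ∩ C = {q₁, q₂}) {P₁ P₂ : Y → Prop}
    (h₁ : ∀ᶠ z in 𝓝 p, P₁ z → z ∈ F '' C) (h₂ : ∀ᶠ z in 𝓝 p, P₂ z → z ∈ F '' C)
    (h₁' : ∀ᶠ x in 𝓝 q₁, x ∈ C → P₁ (F x)) (h₂' : ∀ᶠ x in 𝓝 q₂, x ∈ C → P₂ (F x)) :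
    ∀ᶠ z in 𝓝 p, z ∈ F '' C ↔ P₁ z ∨ P₂ z := by
  have hU : {x | x ∈ C → P₁ (F x)} ∪ {x | x ∈ C → P₂ (F x)} ∈ 𝓝ˢ (F ⁻¹' {p} ∩ C) := by
    rw [hfib, nhdsSet_insert, nhdsSet_singleton]
    exact union_mem_sup h₁' h₂'
  filter_upwards [hF.eventually_preimage_inter_subset hC hU, h₁, h₂] with z hz hz₁ hz₂
  refine ⟨?_, fun h => h.elim hz₁ hz₂⟩
  rintro ⟨x, hx, rfl⟩
  exact (hz ⟨rfl, hx⟩).imp (· hx) (· hx)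

theorem AnalyticAt.eventually_eq_zero_or_of_eventually_or {𝕜 F : Type*}
    [NontriviallyNormedField 𝕜] [NormedAddCommGroup F] [NormedSpace 𝕜 F] {f g : 𝕜 → F} {x : 𝕜}
    (hf : AnalyticAt 𝕜 f x) (hg : AnalyticAt 𝕜 g x) (h : ∀ᶠ t in 𝓝 x, f t = 0 ∨ g t = 0) :
    (∀ᶠ t in 𝓝 x, f t = 0) ∨ ∀ᶠ t in 𝓝 x, g t = 0 := by
  refine hf.eventually_eq_zero_or_eventually_ne_zero.imp_right fun hf0 => ?_
  refine hg.frequently_zero_iff_eventually_zero.1 (Eventually.frequently ?_)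
  exact ((h.filter_mono nhdsWithin_le_nhds).and hf0).mono fun _ ht => ht.1.resolve_left ht.2

theorem fderiv_apply_eq_zero_of_eventually_comp_eq_zero {𝕜 E F : Type*}
    [NontriviallyNormedField 𝕜] [NormedAddCommGroup E] [NormedSpace 𝕜 E]
    [NormedAddCommGroup F] [NormedSpace 𝕜 F] {β : E → F} {γ : 𝕜 → E} {x : 𝕜} {v : E}
    (hβ : DifferentiableAt 𝕜 β (γ x)) (hγ : HasDerivAt γ v x)
    (h : ∀ᶠ t in 𝓝 x, β (γ t) = 0) : fderiv 𝕜 β (γ x) v = 0 :=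
  ((hβ.hasFDerivAt.comp_hasDerivAt x hγ).congr_of_eventuallyEq (h.mono fun _ ht => ht.symm)).unique
    (hasDerivAt_const x 0)

theorem HasStrictFDerivAt.analyticAt_localInverse {𝕜 E F : Type*} [NontriviallyNormedField 𝕜]
    [NormedAddCommGroup E] [NormedSpace 𝕜 E] [CompleteSpace E] [NormedAddCommGroup F]
    [NormedSpace 𝕜 F] [CompleteSpace F] {f : E → F} {e : E ≃L[𝕜] F} {a : E}
    (hf : AnalyticAt 𝕜 f a) (hf' : HasStrictFDerivAt f (e : E →L[𝕜] F) a) :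
    AnalyticAt 𝕜 (hf'.localInverse f e a) (f a) :=
  (hf'.toOpenPartialHomeomorph f).analyticAt_symm' hf'.mem_toOpenPartialHomeomorph_source
    hf hf'.hasFDerivAt.fderiv

section SmoothBranch

variable {𝕜 E : Type*} [NontriviallyNormedField 𝕜] [CompleteSpace 𝕜]
  [NormedAddCommGroup E] [NormedSpace 𝕜 E]

structure IsSmoothBranch (φ : E → 𝕜) (p w : E) : Prop where
  analyticAt : AnalyticAt 𝕜 φ p
  apply_eq_zero : φ p = 0
  fderiv_ne_zero : fderiv 𝕜 φ p ≠ 0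
  tangent_ne_zero : w ≠ 0
  fderiv_apply_tangent : fderiv 𝕜 φ p w = 0

variable [Fact (finrank 𝕜 E = 2)]

attribute [local instance] FiniteDimensional.of_fact_finrank_eq_two

theorem exists_continuousLinearEquiv_prod_apply {w z : E} (hwz : LinearIndependent 𝕜 ![w, z]) :
    ∃ e : (𝕜 × 𝕜) ≃L[𝕜] E, ∀ y, e y = y.1 • w + y.2 • z := by
  set T : 𝕜 × 𝕜 →L[𝕜] E := (ContinuousLinearMap.fst 𝕜 𝕜 𝕜).smulRight w +
    (ContinuousLinearMap.snd 𝕜 𝕜 𝕜).smulRight z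
  have hTinj : Function.Injective T := by
    refine (injective_iff_map_eq_zero T).2 fun y hy => ?_
    obtain ⟨h1, h2⟩ := LinearIndependent.pair_iff.1 hwz y.1 y.2 hy
    exact Prod.ext h1 h2
  have hdim : finrank 𝕜 (𝕜 × 𝕜) = finrank 𝕜 E := by simp [Fact.out (p := finrank 𝕜 E = 2)]
  exact ⟨((T : 𝕜 × 𝕜 →ₗ[𝕜] E).linearEquivOfInjective hTinj hdim).toContinuousLinearEquiv,
    fun y => rfl⟩

theorem IsSmoothBranch.exists_parametrization {α : E → 𝕜} {p u : E}
    (hα : IsSmoothBranch α p u) :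
    ∃ γ : 𝕜 → E, AnalyticAt 𝕜 γ 0 ∧ γ 0 = p ∧ HasDerivAt γ u 0 ∧ IsLocalEquation α γ := by
  have := FiniteDimensional.complete 𝕜 E
  set A := fderiv 𝕜 α p
  obtain ⟨z, hz⟩ : ∃ z, A z = 1 := by
    obtain ⟨z, hz⟩ : ∃ z, A z ≠ 0 := by simpa [DFunLike.ne_iff] using hα.fderiv_ne_zero
    exact ⟨(A z)⁻¹ • z, by simp [hz]⟩
  have huz : LinearIndependent 𝕜 ![u, z] := (LinearIndependent.pair_iff' hα.tangent_ne_zero).2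
    fun a ha => by simp [← ha, A, hα.fderiv_apply_tangent] at hz
  obtain ⟨e, he⟩ := exists_continuousLinearEquiv_prod_apply huz
  -- In the coordinates given by `e`, `dα` is the second coordinate, so `G` below straightens
  -- `{α = 0}` onto the first axis with derivative `e.symm`.
  have hAe : ∀ x, A x = (e.symm x).2 := fun x => by
    conv_lhs => rw [← e.apply_symm_apply x, he]
    simp [A, hα.fderiv_apply_tangent, hz]
  set L : E →L[𝕜] 𝕜 := (ContinuousLinearMap.fst 𝕜 𝕜 𝕜).comp (e.symm : E →L[𝕜] 𝕜 × 𝕜)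
  set G : E → 𝕜 × 𝕜 := fun x => (L x - L p, α x)
  have hGa : AnalyticAt 𝕜 G p := ((L.analyticAt p).sub analyticAt_const).prod hα.analyticAt
  have hG : HasStrictFDerivAt G ((e.symm : E ≃L[𝕜] 𝕜 × 𝕜) : E →L[𝕜] 𝕜 × 𝕜) p := by
    refine ((L.hasStrictFDerivAt.sub_const _).prodMk
      hα.analyticAt.hasStrictFDerivAt).congr_fderiv ?_
    ext x <;> simp [L, A, ← hAe]
  have hGp : G p = 0 := by simp [G, hα.apply_eq_zero]
  set Φ := hG.localInverse G e.symm p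
  have hΦ0 : Φ 0 = p := hGp ▸ hG.localInverse_apply_image
  refine ⟨fun t => Φ (t, 0), ?_, hΦ0, ?_, ?_⟩
  · exact (hGp ▸ hG.analyticAt_localInverse hGa).comp_of_eq
      (analyticAt_id.prod analyticAt_const) rfl
  · have := hG.to_localInverse.hasFDerivAt.comp_hasDerivAt_of_eq (0 : 𝕜)
      ((hasDerivAt_id (0 : 𝕜)).prodMk (hasDerivAt_const (0 : 𝕜) (0 : 𝕜))) hGp
    simp only [Function.comp_def, ContinuousLinearEquiv.coe_coe, ContinuousLinearEquiv.symm_symm,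
      he, one_smul, zero_smul, add_zero] at this
    exact this
  · exact isLocalEquation_snd_of_localInverse (hΦ0 ▸ hG.continuousAt)
      (hGp ▸ hG.eventually_right_inverse) (hΦ0 ▸ hG.eventually_left_inverse)

theorem AnalyticAt.exists_isSmoothBranch_isLocalEquation {c : 𝕜 → E} {w : E}
    (hc : AnalyticAt 𝕜 c 0) (hcw : HasDerivAt c w 0) (hw : w ≠ 0) :
    ∃ φ : E → 𝕜, IsSmoothBranch φ (c 0) w ∧ IsLocalEquation φ c := by
  have := FiniteDimensional.complete 𝕜 E
  obtain ⟨z, hwz⟩ := exists_linearIndependent_pair (𝕜 := 𝕜) hw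
  obtain ⟨e, he⟩ := exists_continuousLinearEquiv_prod_apply hwz
  -- `Φ` maps the first axis onto `c`, so the second coordinate of its local inverse cuts out `c`.
  set Φ : 𝕜 × 𝕜 → E := fun y => c y.1 + y.2 • z
  have hΦa : AnalyticAt 𝕜 Φ 0 :=
    (hc.comp_of_eq analyticAt_fst rfl).add (analyticAt_snd.smul analyticAt_const)
  have hΦ : HasStrictFDerivAt Φ (e : 𝕜 × 𝕜 →L[𝕜] E) 0 := by
    have hc' : HasFDerivAt c (ContinuousLinearMap.smulRight 1 w) (0 : 𝕜 × 𝕜).1 := hcw.hasFDerivAt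
    have hd : HasFDerivAt Φ (e : 𝕜 × 𝕜 →L[𝕜] E) 0 :=
      ((hc'.comp (0 : 𝕜 × 𝕜) hasFDerivAt_fst).add (hasFDerivAt_snd.smul_const z)).congr_fderiv
        (ContinuousLinearMap.ext fun y => by simp [he])
    exact hd.fderiv ▸ hΦa.hasStrictFDerivAt
  have hΦ0 : Φ 0 = c 0 := by simp [Φ]
  set G := hΦ.localInverse Φ e 0
  have hGd : HasFDerivAt (fun x => (G x).2)
      ((ContinuousLinearMap.snd 𝕜 𝕜 𝕜).comp (e.symm : E →L[𝕜] 𝕜 × 𝕜)) (Φ 0) :=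
    hasFDerivAt_snd.comp _ hΦ.to_localInverse.hasFDerivAt
  have hz : e.symm z = (0, 1) := e.symm_apply_eq.2 (by simp [he])
  have hw' : e.symm w = (1, 0) := e.symm_apply_eq.2 (by simp [he])
  refine ⟨fun x => (G x).2, ?_, ?_⟩
  · rw [← hΦ0]
    refine ⟨analyticAt_snd.comp (hΦ.analyticAt_localInverse hΦa),
      by simp [G], fun h => ?_, hw, by simp [hGd.fderiv, hw']⟩
    simpa [hGd.fderiv, hz] using congrArg (· z) h
  · simpa [Φ] using isLocalEquation_snd_of_localInverse (hΦ0 ▸ hΦ.to_localInverse.continuousAt)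
      hΦ.eventually_left_inverse hΦ.eventually_right_inverse

theorem IsSmoothBranch.fderiv_apply_eq_zero_or {α β₁ β₂ : E → 𝕜} {p u : E}
    (hα : IsSmoothBranch α p u) (hβ₁ : AnalyticAt 𝕜 β₁ p) (hβ₂ : AnalyticAt 𝕜 β₂ p)
    (h : ∀ᶠ z in 𝓝 p, α z = 0 → β₁ z = 0 ∨ β₂ z = 0) :
    fderiv 𝕜 β₁ p u = 0 ∨ fderiv 𝕜 β₂ p u = 0 := by
  obtain ⟨γ, hγ, rfl, hγu, hloc, -⟩ := hα.exists_parametrization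
  have hor : ∀ᶠ t in 𝓝 0, β₁ (γ t) = 0 ∨ β₂ (γ t) = 0 :=
    (hγu.continuousAt.eventually h).and hloc |>.mono fun _ ht => ht.1 ht.2
  exact (AnalyticAt.eventually_eq_zero_or_of_eventually_or (hβ₁.comp hγ) (hβ₂.comp hγ) hor).imp
    (fderiv_apply_eq_zero_of_eventually_comp_eq_zero hβ₁.differentiableAt hγu)
    (fderiv_apply_eq_zero_of_eventually_comp_eq_zero hβ₂.differentiableAt hγu)

theorem IsSmoothBranch.fderiv_apply_eq_zero_of_eventually_imp {φ φ₁ φ₂ : E → 𝕜} {p w : E}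
    (h₁ : IsSmoothBranch φ₁ p w) (h₂ : IsSmoothBranch φ₂ p w) (hφ : AnalyticAt 𝕜 φ p)
    (hφp : φ p = 0) (hdφ : fderiv 𝕜 φ p ≠ 0)
    (h : ∀ᶠ z in 𝓝 p, φ z = 0 → φ₁ z = 0 ∨ φ₂ z = 0) : fderiv 𝕜 φ p w = 0 := by
  obtain ⟨u, hu, hdu⟩ := (fderiv 𝕜 φ p).exists_ne_zero_apply_eq_zero
  obtain ⟨c, rfl⟩ : ∃ c : 𝕜, c • u = w := by
    rcases IsSmoothBranch.fderiv_apply_eq_zero_or ⟨hφ, hφp, hdφ, hu, hdu⟩ h₁.analyticAt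
      h₂.analyticAt h with h₁u | h₂u
    · exact (fderiv 𝕜 φ₁ p).exists_smul_eq_of_apply_eq_zero h₁.fderiv_ne_zero hu h₁u
        h₁.fderiv_apply_tangent
    · exact (fderiv 𝕜 φ₂ p).exists_smul_eq_of_apply_eq_zero h₂.fderiv_ne_zero hu h₂u
        h₂.fderiv_apply_tangent
  simp [hdu]

variable {E' : Type*} [NormedAddCommGroup E'] [NormedSpace 𝕜 E'] [Fact (finrank 𝕜 E' = 2)]

theorem IsSmoothBranch.exists_isSmoothBranch_image {F : E → E'} {α : E → 𝕜} {q v : E}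
    (hα : IsSmoothBranch α q v) (hF : AnalyticAt 𝕜 F q) (hv : fderiv 𝕜 F q v ≠ 0) :
    ∃ φ : E' → 𝕜, IsSmoothBranch φ (F q) (fderiv 𝕜 F q v) ∧
      (∀ᶠ z in 𝓝 (F q), φ z = 0 → z ∈ F '' {x | α x = 0}) ∧
      ∀ᶠ x in 𝓝 q, α x = 0 → φ (F x) = 0 := by
  obtain ⟨γ, hγ, rfl, hγv, hloc⟩ := hα.exists_parametrization
  obtain ⟨φ, hφ, hφloc⟩ := (hF.comp hγ).exists_isSmoothBranch_isLocalEquation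
    (hF.differentiableAt.hasFDerivAt.comp_hasDerivAt 0 hγv) hv
  exact ⟨φ, hφ, hloc.eventually_mem_image hφloc, hloc.eventually_comp_eq_zero hφloc⟩

end SmoothBranch

theorem normalCrossingAt_iff_linearIndependent {Δ : Set (Fin 2 → ℂ)} {φ₁ φ₂ : (Fin 2 → ℂ) → ℂ}
    {p w₁ w₂ : Fin 2 → ℂ} (h₁ : IsSmoothBranch φ₁ p w₁) (h₂ : IsSmoothBranch φ₂ p w₂)
    (hΔ : ∀ᶠ z in 𝓝 p, z ∈ Δ ↔ φ₁ z = 0 ∨ φ₂ z = 0) :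
    NormalCrossingAt Δ p ↔ LinearIndependent ℂ ![w₁, w₂] := by
  refine ⟨fun ⟨φ, ψ, hφ, hψ, hφp, hψp, hind, hiff⟩ => ?_, fun hw => ?_⟩
  · by_contra hw
    obtain ⟨c, rfl⟩ : ∃ c : ℂ, c • w₁ = w₂ := by
      simpa [LinearIndependent.pair_iff' h₁.tangent_ne_zero] using hw
    have hc : c ≠ 0 := by
      rintro rfl
      exact h₂.tangent_ne_zero (zero_smul _ _)
    have h₂' : IsSmoothBranch φ₂ p w₁ :=
      { h₂ with
        tangent_ne_zero := h₁.tangent_ne_zero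
        fderiv_apply_tangent := by simpa [hc] using h₂.fderiv_apply_tangent }
    have himp : ∀ᶠ z in 𝓝 p, φ z = 0 ∨ ψ z = 0 → φ₁ z = 0 ∨ φ₂ z = 0 :=
      (hiff.and hΔ).mono fun _ hz h => hz.2.1 (hz.1.2 h)
    refine ContinuousLinearMap.not_linearIndependent_of_apply_eq_zero h₁.tangent_ne_zero ?_ ?_ hind
    · exact h₁.fderiv_apply_eq_zero_of_eventually_imp h₂' hφ hφp (by simpa using hind.ne_zero 0)
        (himp.mono fun _ h hz => h (Or.inl hz))
    · exact h₁.fderiv_apply_eq_zero_of_eventually_imp h₂' hψ hψp (by simpa using hind.ne_zero 1)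
        (himp.mono fun _ h hz => h (Or.inr hz))
  · exact ⟨φ₁, φ₂, h₁.analyticAt, h₂.analyticAt, h₁.apply_eq_zero, h₂.apply_eq_zero,
      ContinuousLinearMap.linearIndependent_of_apply_eq_zero hw h₁.fderiv_ne_zero h₂.fderiv_ne_zero
        h₁.fderiv_apply_tangent h₂.fderiv_apply_tangent, hΔ⟩

namespace MvPolynomial

variable {𝕜 σ : Type*} [NontriviallyNormedField 𝕜] [Fintype σ]

theorem hasFDerivAt_eval (P : MvPolynomial σ 𝕜) (x : σ → 𝕜) :
    HasFDerivAt (fun x => eval x P)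
      (∑ i, eval x (pderiv i P) • (ContinuousLinearMap.proj i : (σ → 𝕜) →L[𝕜] 𝕜)) x := by
  classical
  induction P using MvPolynomial.induction_on with
  | C a =>
    simp only [eval_C]
    refine (hasFDerivAt_const a x).congr_fderiv (ContinuousLinearMap.ext fun v => ?_)
    simp
  | add P Q hP hQ =>
    simp only [map_add]
    refine (hP.add hQ).congr_fderiv ?_
    rw [← Finset.sum_add_distrib]
    exact Finset.sum_congr rfl fun i _ => (add_smul _ _ _).symm
  | mul_X P n hP =>
    simp only [map_mul, eval_X]
    refine (hP.mul (ContinuousLinearMap.proj n).hasFDerivAt).congr_fderiv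
      (ContinuousLinearMap.ext fun v => ?_)
    simp [pderiv_X, Pi.single_apply, Finset.sum_add_distrib, add_mul, Finset.mul_sum, apply_ite,
      mul_assoc]

theorem fderiv_eval_apply (P : MvPolynomial σ 𝕜) (x v : σ → 𝕜) :
    fderiv 𝕜 (fun x => eval x P) x v = ∑ i, eval x (pderiv i P) * v i := by
  simp [(hasFDerivAt_eval P x).fderiv]

theorem fderiv_eval_ne_zero {P : MvPolynomial σ 𝕜} {x : σ → 𝕜}
    (h : (fun i => eval x (pderiv i P)) ≠ 0) : fderiv 𝕜 (fun x => eval x P) x ≠ 0 := by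
  classical
  refine fun h0 => h ?_
  ext i
  simpa [fderiv_eval_apply, Pi.single_apply] using congrArg (· (Pi.single i 1)) h0

end MvPolynomial

section PolynomialMap

variable {𝕜 : Type*} [NontriviallyNormedField 𝕜] (f g : MvPolynomial (Fin 2) 𝕜)

theorem analyticAt_eval_pair [CompleteSpace 𝕜] (q : Fin 2 → 𝕜) :
    AnalyticAt 𝕜 (fun x => ![eval x f, eval x g]) q := by
  refine AnalyticAt.pi fun i => ?_
  fin_cases i
  · exact AnalyticOnNhd.eval_mvPolynomial f q trivial
  · exact AnalyticOnNhd.eval_mvPolynomial g q trivial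

theorem fderiv_eval_pair_apply (q v : Fin 2 → 𝕜) :
    fderiv 𝕜 (fun x => ![eval x f, eval x g]) q v =
      ![∑ i, eval q (pderiv i f) * v i, ∑ i, eval q (pderiv i g) * v i] := by
  have : HasFDerivAt (fun x => ![eval x f, eval x g])
      (ContinuousLinearMap.pi ![fderiv 𝕜 (fun x => eval x f) q, fderiv 𝕜 (fun x => eval x g) q])
      q := by
    refine hasFDerivAt_pi'.2 fun i => ?_
    fin_cases i
    · simpa using (hasFDerivAt_eval f q).differentiableAt.hasFDerivAt
    · simpa using (hasFDerivAt_eval g q).differentiableAt.hasFDerivAt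
  rw [this.fderiv]
  ext i; fin_cases i <;> simp [fderiv_eval_apply]

end PolynomialMap

theorem exists_isSmoothBranch_image_of_critical {𝕜 : Type*} [NontriviallyNormedField 𝕜]
    [CompleteSpace 𝕜] {f g J J11 J12 : MvPolynomial (Fin 2) 𝕜}
    (hJ11 : J11 = pderiv 0 J * pderiv 1 f - pderiv 1 J * pderiv 0 f)
    (hJ12 : J12 = pderiv 0 J * pderiv 1 g - pderiv 1 J * pderiv 0 g)
    {F : (Fin 2 → 𝕜) → (Fin 2 → 𝕜)} (hF : ∀ q, F q = ![eval q f, eval q g]) {q v : Fin 2 → 𝕜}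
    (hqJ : eval q J = 0) (hJq : (fun i => eval q (pderiv i J)) ≠ 0) (hv : v ≠ 0)
    (hvJ : ∑ i, eval q (pderiv i J) * v i = 0) (hFv : fderiv 𝕜 F q v ≠ 0) :
    ∃ (φ : (Fin 2 → 𝕜) → 𝕜) (c : 𝕜), c ≠ 0 ∧
      IsSmoothBranch φ (F q) (c • ![eval q J11, eval q J12]) ∧
      (∀ᶠ z in 𝓝 (F q), φ z = 0 → z ∈ F '' {x | eval x J = 0}) ∧
      ∀ᶠ x in 𝓝 q, eval x J = 0 → φ (F x) = 0 := by
  obtain rfl : F = fun x => ![eval x f, eval x g] := funext hF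
  have hα : IsSmoothBranch (fun x => eval x J) q v :=
    ⟨AnalyticOnNhd.eval_mvPolynomial J q trivial, hqJ, fderiv_eval_ne_zero hJq, hv,
      by rwa [fderiv_eval_apply]⟩
  obtain ⟨φ, hφ, hφΔ, hφC⟩ := hα.exists_isSmoothBranch_image (analyticAt_eval_pair f g q) hFv
  obtain ⟨c, rfl⟩ := exists_smul_eq_of_sum_mul_eq_zero hJq hvJ
  have hFc : fderiv 𝕜 (fun x => ![eval x f, eval x g]) q
      (c • ![eval q (pderiv 1 J), -eval q (pderiv 0 J)]) = (-c) • ![eval q J11, eval q J12] := by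
    rw [fderiv_eval_pair_apply]
    ext i; fin_cases i <;>
      simp only [Fin.sum_univ_two, Pi.smul_apply, smul_eq_mul, Matrix.cons_val_zero,
        Matrix.cons_val_one, Matrix.cons_val_fin_one, Fin.zero_eta, Fin.mk_one, hJ11, hJ12, map_sub,
        map_mul] <;> ring
  rw [hFc] at hφ hFv
  exact ⟨φ, -c, fun h => hFv (by simp [h]), hφ, hφΔ, hφC⟩

theorem normal_crossing_iff_general (f g J J11 J12 : MvPolynomial (Fin 2) ℂ)
    (hJ11 : J11 = pderiv 0 J * pderiv 1 f - pderiv 1 J * pderiv 0 f)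
    (hJ12 : J12 = pderiv 0 J * pderiv 1 g - pderiv 1 J * pderiv 0 g)
    (F : (Fin 2 → ℂ) → (Fin 2 → ℂ))
    (hF : ∀ q, F q = ![eval q f, eval q g])
    (hproper : IsProperMap F)
    (C : Set (Fin 2 → ℂ)) (hC : C = {q | eval q J = 0})
    (p q1 q2 : Fin 2 → ℂ)
    (hfib : F ⁻¹' {p} ∩ C = {q1, q2})
    (hsmooth : ∀ q ∈ ({q1, q2} : Set (Fin 2 → ℂ)),
      (fun i => eval q (pderiv i J)) ≠ (0 : Fin 2 → ℂ))
    (hdF : ∀ q ∈ ({q1, q2} : Set (Fin 2 → ℂ)),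
      ∃ v : Fin 2 → ℂ, v ≠ 0 ∧ (∑ i, eval q (pderiv i J) * v i) = 0 ∧
        fderiv ℂ F q v ≠ 0) :
    NormalCrossingAt (F '' C) p ↔
      eval q1 J11 * eval q2 J12 - eval q1 J12 * eval q2 J11 ≠ 0 := by
  subst hC
  have hbranch : ∀ q ∈ ({q1, q2} : Set (Fin 2 → ℂ)), ∃ (φ : (Fin 2 → ℂ) → ℂ) (c : ℂ), c ≠ 0 ∧
      IsSmoothBranch φ p (c • ![eval q J11, eval q J12]) ∧
      (∀ᶠ z in 𝓝 p, φ z = 0 → z ∈ F '' {x | eval x J = 0}) ∧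
      ∀ᶠ x in 𝓝 q, eval x J = 0 → φ (F x) = 0 := by
    intro q hq
    obtain ⟨hqp, hqJ⟩ : F q = p ∧ eval q J = 0 := by rw [← hfib] at hq; exact hq
    obtain ⟨v, hv, hvJ, hFv⟩ := hdF q hq
    exact hqp ▸ exists_isSmoothBranch_image_of_critical hJ11 hJ12 hF hqJ (hsmooth q hq) hv hvJ hFv
  choose! φ c hc hφ hφΔ hφC using hbranch
  have hq1 : q1 ∈ ({q1, q2} : Set (Fin 2 → ℂ)) := by simp
  have hq2 : q2 ∈ ({q1, q2} : Set (Fin 2 → ℂ)) := by simp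
  have hΔ := hproper.eventually_mem_image_iff_or (isClosed_eq (continuous_eval J) continuous_const)
    hfib (hφΔ q1 hq1) (hφΔ q2 hq2) (hφC q1 hq1) (hφC q2 hq2)
  rw [normalCrossingAt_iff_linearIndependent (hφ q1 hq1) (hφ q2 hq2) hΔ,
    LinearIndependent.pair_smul_smul_iff (hc q1 hq1).isUnit (hc q2 hq2).isUnit,
    linearIndependent_pair_iff_det_ne_zero]
  simp

/-- If a proper polynomial map `F = (f,g)` has exactly two critical preimages
`q₁ ≠ q₂` of `p ∈ Δ(F)`, both smooth points of `C(F)` where `dF|T C(F)` is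
nonzero, then `Δ(F)` has a normal crossing at `p` iff the vectors
`(J₁,₁(qᵢ), J₁,₂(qᵢ))`, `i = 1,2`, are linearly independent. -/
theorem normal_crossing_iff (f g J J11 J12 : MvPolynomial (Fin 2) ℂ)
    (hJ : J = pderiv 0 f * pderiv 1 g - pderiv 1 f * pderiv 0 g)
    (hJ11 : J11 = pderiv 0 J * pderiv 1 f - pderiv 1 J * pderiv 0 f)
    (hJ12 : J12 = pderiv 0 J * pderiv 1 g - pderiv 1 J * pderiv 0 g)
    (F : (Fin 2 → ℂ) → (Fin 2 → ℂ))
    (hF : ∀ q, F q = ![eval q f, eval q g])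
    (hproper : IsProperMap F)
    (C : Set (Fin 2 → ℂ)) (hC : C = {q | eval q J = 0})
    (p q1 q2 : Fin 2 → ℂ) (hq12 : q1 ≠ q2)
    (hfib : F ⁻¹' {p} ∩ C = {q1, q2})
    (hsmooth : ∀ q ∈ ({q1, q2} : Set (Fin 2 → ℂ)),
      (fun i => eval q (pderiv i J)) ≠ (0 : Fin 2 → ℂ))
    (hdF : ∀ q ∈ ({q1, q2} : Set (Fin 2 → ℂ)),
      ∃ v : Fin 2 → ℂ, v ≠ 0 ∧ (∑ i, eval q (pderiv i J) * v i) = 0 ∧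
        fderiv ℂ F q v ≠ 0) :
    NormalCrossingAt (F '' C) p ↔
      eval q1 J11 * eval q2 J12 - eval q1 J12 * eval q2 J11 ≠ 0 :=
  normal_crossing_iff_general f g J J11 J12 hJ11 hJ12 F hF hproper C hC p q1 q2 hfib hsmooth hdF
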